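/- arXiv:2402.16549 — 5 statements merged into one kernel-verified Lean document; each statement's English description precedes it below -/
import Mathlib

section
/- Let T be a complete local Noetherian ring with maximal ideal M, let C be a countable set of prime ideals of T none of which equals M, and let D be a countable set of elements of T. If I is an ideal of T not contained in any single member of C, then I is not contained in the union of the cosets P + r over all P in C and r in D. -/
/-!
Enumerate the countably many cosets `P n + r n`. Starting from `0 ∈ I`, step `n` moves the
current point of `I` by an element of a high power of `M` to a point outside `P n + r n`; this is
possible because `M ^ c * I ⊄ P n` by primality. Krull's intersection theorem then puts a whole
`M`-adic neighbourhood of the new point outside `P n + r n`, and later steps stay inside it. The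
points form an `M`-adic Cauchy sequence; its limit lies in `I`, which is `M`-adically closed (Krull
again), and in none of the cosets.
-/

/-- Krull's intersection theorem in `R ⧸ J`: ideals are `K`-adically closed. -/
theorem Ideal.mem_of_forall_mem_sup_pow {R : Type*} [CommRing R] [IsNoetherianRing R]
    {K : Ideal R} (hK : K ≤ Ideal.jacobson ⊥) {J : Ideal R} {y : R}
    (hy : ∀ k : ℕ, y ∈ J ⊔ K ^ k) : y ∈ J := by
  have hmem : Ideal.Quotient.mk J y ∈ (⨅ k : ℕ, K ^ k • ⊤ : Submodule R (R ⧸ J)) := by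
    refine Submodule.mem_iInf _ |>.mpr fun k => ?_
    obtain ⟨a, ha, b, hb, rfl⟩ := Submodule.mem_sup.mp (hy k)
    rw [map_add, Ideal.Quotient.eq_zero_iff_mem.mpr ha, zero_add, ← mul_one b, map_mul,
      ← Ideal.Quotient.algebraMap_eq, ← Algebra.smul_def]
    exact Submodule.smul_mem_smul hb Submodule.mem_top
  rw [K.iInf_pow_smul_eq_bot_of_le_jacobson hK, Submodule.mem_bot] at hmem
  exact Ideal.Quotient.eq_zero_iff_mem.mp hmem

theorem Ideal.exists_mem_sub_mem_sub_notMem {R : Type*} [CommRing R] {P I J : Ideal R}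
    [P.IsPrime] (hI : ¬ I ≤ P) (hJ : ¬ J ≤ P) {x : R} (hx : x ∈ I) (r : R) :
    ∃ z ∈ I, z - x ∈ J ∧ z - r ∉ P := by
  by_cases hxr : x - r ∈ P
  · obtain ⟨δ, hδ, hδP⟩ := SetLike.not_le_iff_exists.mp
      fun h => ((‹P.IsPrime›.mul_le).mp h).elim hJ hI
    refine ⟨x + δ, I.add_mem hx (Ideal.mul_le_right hδ), by simpa using Ideal.mul_le_left hδ,
      fun h => hδP ?_⟩
    simpa using P.sub_mem h hxr
  · exact ⟨x, hx, by simp, hxr⟩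

theorem Ideal.sub_mem_pow_of_monotone {R : Type*} [CommRing R] {K : Ideal R} {x : ℕ → R}
    {c : ℕ → ℕ} (hc : Monotone c) (hx : ∀ n, x (n + 1) - x n ∈ K ^ c n) {m n : ℕ}
    (hmn : m ≤ n) : x n - x m ∈ K ^ c m := by
  induction n, hmn using Nat.le_induction with
  | base => simp
  | succ n hmn ih =>
    rw [← sub_add_sub_cancel]
    exact add_mem (Ideal.pow_le_pow_right (hc hmn) (hx n)) ih

theorem IsPrecomplete.exists_sub_mem_pow {R : Type*} [CommRing R] {K : Ideal R}
    [IsPrecomplete K R] {x : ℕ → R} (hx : ∀ {m n}, m ≤ n → x n - x m ∈ K ^ m) :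
    ∃ L, ∀ n, L - x n ∈ K ^ n := by
  have hsmul (n : ℕ) : (K ^ n • ⊤ : Ideal R) = K ^ n := by rw [smul_eq_mul, Ideal.mul_top]
  obtain ⟨L, hL⟩ := IsPrecomplete.prec ‹_› (f := x) fun hmn => by
    rw [SModEq.sub_mem, hsmul, ← neg_sub]
    exact neg_mem (hx hmn)
  refine ⟨L, fun n => ?_⟩
  rw [← neg_sub, ← hsmul]
  exact neg_mem (SModEq.sub_mem.mp (hL n))

theorem IsPrecomplete.exists_mem_forall_notMem_nat {R : Type*} [CommRing R] {K : Ideal R}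
    [IsPrecomplete K R] (I : Ideal R) (hI : ∀ y, (∀ k : ℕ, y ∈ I ⊔ K ^ k) → y ∈ I)
    (A : ℕ → Set R)
    (hA : ∀ i, ∀ x ∈ I, ∀ c : ℕ, ∃ z ∈ I, z - x ∈ K ^ c ∧ ∃ k : ℕ, ∀ w, w - z ∈ K ^ k → w ∉ A i) :
    ∃ L ∈ I, ∀ i, L ∉ A i := by
  choose! z hzI hzx k hk using hA
  -- The state is a point and a radius; the radius exceeds the one supplied by `hA`, so the
  -- neighbourhoods are nested.
  let s : ℕ → R × ℕ := fun n =>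
    Nat.rec (0, 0) (fun n p => (z n p.1 p.2, max (p.2 + 1) (k n p.1 p.2))) n
  set x : ℕ → R := fun n => (s n).1
  set c : ℕ → ℕ := fun n => (s n).2
  have hxI (n : ℕ) : x n ∈ I := by
    induction n with
    | zero => exact I.zero_mem
    | succ n ih => exact hzI n _ ih _
  have hc : StrictMono c := strictMono_nat_of_lt_succ fun n => Nat.lt_of_lt_of_le
    (Nat.lt_succ_self _) (le_max_left _ (k n (x n) (c n)))
  have hxc {m n : ℕ} (hmn : m ≤ n) : x n - x m ∈ K ^ c m :=
    Ideal.sub_mem_pow_of_monotone hc.monotone (fun n => hzx n _ (hxI n) _) hmn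
  obtain ⟨L, hL⟩ := IsPrecomplete.exists_sub_mem_pow (K := K)
    fun hmn => Ideal.pow_le_pow_right (hc.id_le _) (hxc hmn)
  refine ⟨L, hI L fun n => ?_, fun i => hk i _ (hxI i) (c i) L ?_⟩
  · rw [← add_sub_cancel (x n) L]
    exact Submodule.add_mem_sup (hxI n) (hL n)
  · have hci : k i (x i) (c i) ≤ c (i + 1) := le_max_right _ _
    rw [← sub_add_sub_cancel L (x (c (i + 1))) (x (i + 1))]
    exact Ideal.pow_le_pow_right hci (add_mem (hL _) (hxc (hc.id_le (i + 1))))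

theorem IsPrecomplete.exists_mem_forall_notMem {R ι : Type*} [CommRing R] [Countable ι]
    {K : Ideal R} [IsPrecomplete K R] (I : Ideal R)
    (hI : ∀ y, (∀ k : ℕ, y ∈ I ⊔ K ^ k) → y ∈ I) (A : ι → Set R)
    (hA : ∀ i, ∀ x ∈ I, ∀ c : ℕ, ∃ z ∈ I, z - x ∈ K ^ c ∧ ∃ k : ℕ, ∀ w, w - z ∈ K ^ k → w ∉ A i) :
    ∃ L ∈ I, ∀ i, L ∉ A i := by
  cases isEmpty_or_nonempty ι with
  | inl => exact ⟨0, I.zero_mem, isEmptyElim⟩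
  | inr =>
    obtain ⟨e, he⟩ := exists_surjective_nat ι
    obtain ⟨L, hLI, hL⟩ := exists_mem_forall_notMem_nat I hI (A ∘ e) fun n => hA (e n)
    exact ⟨L, hLI, he.forall.mpr hL⟩

open IsLocalRing in
theorem IsLocalRing.exists_mem_sub_mem_pow_forall_sub_notMem {R : Type*} [CommRing R]
    [IsNoetherianRing R] [IsLocalRing R] {P I : Ideal R} [hP : P.IsPrime]
    (hPM : P ≠ maximalIdeal R) (hI : ¬ I ≤ P) {x : R} (hx : x ∈ I) (r : R) (c : ℕ) :
    ∃ z ∈ I, z - x ∈ maximalIdeal R ^ c ∧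
      ∃ k : ℕ, ∀ w, w - z ∈ maximalIdeal R ^ k → w - r ∉ P := by
  have hMc : ¬ maximalIdeal R ^ c ≤ P := fun h =>
    hPM ((maximalIdeal.isMaximal R).eq_of_le hP.ne_top (hP.le_of_pow_le h)).symm
  obtain ⟨z, hzI, hzx, hzr⟩ := Ideal.exists_mem_sub_mem_sub_notMem hI hMc hx r
  obtain ⟨k, hk⟩ : ∃ k : ℕ, z - r ∉ P ⊔ maximalIdeal R ^ k := by
    by_contra! h
    exact hzr (Ideal.mem_of_forall_mem_sup_pow (maximalIdeal_le_jacobson _) h)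
  refine ⟨z, hzI, hzx, k, fun w hw hwr => hk ?_⟩
  rw [← sub_sub_sub_cancel_left r z w]
  exact sub_mem (Ideal.mem_sup_left hwr) (Ideal.mem_sup_right hw)

/-- Heitmann, Lemma 2 / countable prime avoidance. -/
theorem statement_0 (T : Type*) [CommRing T] [IsNoetherianRing T] [IsLocalRing T]
    [IsAdicComplete (IsLocalRing.maximalIdeal T) T]
    (C : Set (Ideal T)) (hCcount : C.Countable)
    (hCprime : ∀ P ∈ C, P.IsPrime)
    (hCnotmax : ∀ P ∈ C, P ≠ IsLocalRing.maximalIdeal T)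
    (D : Set T) (hDcount : D.Countable)
    (I : Ideal T) (hI : ∀ P ∈ C, ¬ I ≤ P) :
    ¬ (I : Set T) ⊆ ⋃ P ∈ C, ⋃ r ∈ D, (fun p => p + r) '' (P : Set T) := by
  intro h
  have : Countable (C ×ˢ D) := (hCcount.prod hDcount).to_subtype
  obtain ⟨L, hLI, hL⟩ := IsPrecomplete.exists_mem_forall_notMem (K := IsLocalRing.maximalIdeal T)
    I (fun _ => Ideal.mem_of_forall_mem_sup_pow (IsLocalRing.maximalIdeal_le_jacobson _))
    (fun Pr : ↥(C ×ˢ D) => {w | w - Pr.1.2 ∈ Pr.1.1}) fun ⟨(P, r), hP, _⟩ x hx c =>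
      have := hCprime P hP
      IsLocalRing.exists_mem_sub_mem_pow_forall_sub_notMem (hCnotmax P hP) (hI P hP) hx r c
  obtain ⟨P, hP, r, hr, hLr⟩ : ∃ P ∈ C, ∃ r ∈ D, L - r ∈ P := by
    simpa [sub_eq_add_neg] using h hLI
  exact hL ⟨(P, r), hP, hr⟩ hLr
end

section
/- Let T = ℚ[[x,y,z,w,t]]/((x) ∩ (y,z)) and let a be an element of T with a ∉ (x,y,z). Then every minimal prime ideal of the ideal (a, x) of T does not contain the ideal (y, z), and every minimal prime ideal of the ideal (a, y, z) of T does not contain the ideal (x). -/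
noncomputable section

/-- The power series ring `ℚ[[x,y,z,w,t]]`. -/
abbrev PS : Type := MvPowerSeries (Fin 5) ℚ

/-- The variables `x, y, z, w, t`. -/
def V (i : Fin 5) : PS := MvPowerSeries.X i

/-- The ideal `(x) ∩ (y, z)` of `ℚ[[x,y,z,w,t]]`. -/
def K : Ideal PS := Ideal.span {V 0} ⊓ Ideal.span {V 1, V 2}

/-- The ring `T = ℚ[[x,y,z,w,t]]/((x) ∩ (y,z))`. -/
abbrev T : Type := PS ⧸ K

/-- The image of `x` in `T`. -/
def xT : T := Ideal.Quotient.mk K (V 0)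
/-- The image of `y` in `T`. -/
def yT : T := Ideal.Quotient.mk K (V 1)
/-- The image of `z` in `T`. -/
def zT : T := Ideal.Quotient.mk K (V 2)

/-! Ideals of `ℚ[[x,y,z,w,t]]` generated by variables are prime: they are kernels of the maps
setting those variables to `0`. Hence for `A ∉ (x,y,z)` the chains of primes `(x) ⊂ (x,y)` and
`(y,z) ⊂ (x,y,z)` make `y` a nonzerodivisor modulo `(A, x)` and `x` a nonzerodivisor modulo
`(A, y, z)`. Both ideals contain `(x) ∩ (y,z)`, so this persists in `T`, and a nonzerodivisor
modulo an ideal lies in none of its minimal primes. -/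

namespace MvPowerSeries

variable {σ R : Type*} [CommRing R]

theorem mem_span_X_image_of_coeff_eq_zero (S : Finset σ) {f : MvPowerSeries σ R}
    (hf : ∀ m : σ →₀ ℕ, (∀ i ∈ S, m i = 0) → coeff m f = 0) :
    f ∈ Ideal.span (X '' (S : Set σ)) := by
  classical
  induction S using Finset.induction_on generalizing f with
  | empty =>
    obtain rfl : f = 0 := ext fun m => by simpa using hf m
    exact zero_mem _
  | insert s S hs ih =>
    let g : MvPowerSeries σ R := fun m => if m s = 0 then coeff m f else 0
    have coeff_g (m : σ →₀ ℕ) : coeff m g = if m s = 0 then coeff m f else 0 := rfl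
    obtain ⟨q, hq⟩ : X s ∣ f - g := X_dvd_iff.mpr fun m hm => by
      rw [map_sub, coeff_g, if_pos hm, sub_self]
    have hg : g ∈ Ideal.span (X '' (S : Set σ)) := ih fun m hm => by
      rw [coeff_g]
      split_ifs with hms
      · exact hf m (by simpa [hms] using hm)
      · rfl
    rw [← sub_add_cancel f g, hq, Finset.coe_insert, Set.image_insert_eq, Ideal.span_insert]
    exact add_mem (Ideal.mem_sup_left (Ideal.mul_mem_right _ _ (Ideal.mem_span_singleton_self _)))
      (Ideal.mem_sup_right hg)

theorem ker_killCompl (S : Finset σ) :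
    RingHom.ker (killCompl (R := R) (Function.Embedding.subtype (· ∉ S))) =
      Ideal.span (X '' (S : Set σ)) := by
  refine le_antisymm (fun f hf => mem_span_X_image_of_coeff_eq_zero S fun m hm => ?_) ?_
  · obtain ⟨n, rfl⟩ :
        m ∈ Set.range (Finsupp.embDomain (Function.Embedding.subtype (· ∉ S))) := by
      rw [Finsupp.mem_range_embDomain_iff]
      intro i hi
      exact ⟨⟨i, fun hiS => Finsupp.mem_support_iff.mp hi (hm i hiS)⟩, rfl⟩
    rw [← coeff_killCompl, RingHom.mem_ker.mp hf, map_zero]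
  · rw [Ideal.span_le]
    rintro _ ⟨i, hi, rfl⟩
    exact killCompl_X_eq_zero (by simpa using hi)

theorem span_X_image_insert [DecidableEq σ] (i : σ) (S : Finset σ) :
    (Ideal.span (X '' ↑(insert i S)) : Ideal (MvPowerSeries σ R)) =
      Ideal.span (X '' (S : Set σ)) ⊔ Ideal.span {X i} := by
  rw [Finset.coe_insert, Set.image_insert_eq, Ideal.span_insert, sup_comm]

theorem isPrime_span_X_image [IsDomain R] (S : Finset σ) :
    (Ideal.span (X '' (S : Set σ)) : Ideal (MvPowerSeries σ R)).IsPrime := by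
  have : IsDomain (MvPowerSeries {i // i ∉ S} R) := NoZeroDivisors.to_isDomain _
  rw [← ker_killCompl]
  exact RingHom.ker_isPrime _

theorem X_notMem_span_X_image [Nontrivial R] {S : Finset σ} {i : σ} (hi : i ∉ S) :
    (X i : MvPowerSeries σ R) ∉ Ideal.span (X '' (S : Set σ)) := by
  rw [← ker_killCompl, RingHom.mem_ker]
  have hX := killCompl_X (R := R) (e := Function.Embedding.subtype (· ∉ S)) ⟨i, hi⟩
  simp only [Function.Embedding.subtype_apply] at hX
  rw [hX]
  exact nonZeroDivisors.ne_zero X_mem_nonzeroDivisors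

end MvPowerSeries

namespace Ideal

variable {R : Type*} [CommRing R]

theorem mem_span_singleton_sup_of_mul_mem {I : Ideal R} {x a s : R} (hI : I.IsPrime)
    (hx : x ∉ I) (hIx : (I ⊔ span {x}).IsPrime) (ha : a ∉ I ⊔ span {x})
    (hs : s * x ∈ span {a} ⊔ I) : s ∈ span {a} ⊔ I := by
  obtain ⟨_, hca, i, hi, hsx⟩ := Submodule.mem_sup.mp hs
  obtain ⟨c, rfl⟩ := mem_span_singleton'.mp hca
  have hc : c ∈ I ⊔ span {x} := by
    refine (hIx.mem_or_mem ?_).resolve_right ha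
    rw [show c * a = s * x - i by rw [← hsx]; ring]
    exact sub_mem (mem_sup_right (mul_mem_left _ _ (mem_span_singleton_self x))) (mem_sup_left hi)
  obtain ⟨j, hj, _, hdx, rfl⟩ := Submodule.mem_sup.mp hc
  obtain ⟨d, rfl⟩ := mem_span_singleton'.mp hdx
  have hrest : s - d * a ∈ I := by
    refine (hI.mem_or_mem ?_).resolve_left hx
    rw [show x * (s - d * a) = j * a + i by linear_combination -hsx]
    exact add_mem (mul_mem_right _ _ hj) hi
  rw [← add_sub_cancel (d * a) s]
  exact Submodule.add_mem_sup (mul_mem_left _ _ (mem_span_singleton_self a)) hrest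

theorem notMem_of_mem_minimalPrimes_of_mul_mem {I P : Ideal R} {r : R}
    (hr : ∀ s, s * r ∈ I → s ∈ I) (hP : P ∈ I.minimalPrimes) : r ∉ P := by
  rw [minimalPrimes_eq_comap] at hP
  obtain ⟨p, hp, rfl⟩ := hP
  intro hrp
  refine Set.disjoint_left.mp (disjoint_nonZeroDivisors_of_mem_minimalPrimes hp) hrp
    (mem_nonZeroDivisors_iff_right.mpr fun s hs => ?_)
  obtain ⟨s, rfl⟩ := Quotient.mk_surjective s
  rw [← map_mul, Quotient.eq_zero_iff_mem] at hs
  exact Quotient.eq_zero_iff_mem.mpr (hr s hs)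

theorem notMem_of_mem_minimalPrimes_map_mk {K J : Ideal R} {P : Ideal (R ⧸ K)} {r : R}
    (hKJ : K ≤ J) (hr : ∀ s, s * r ∈ J → s ∈ J)
    (hP : P ∈ (J.map (Quotient.mk K)).minimalPrimes) :
    Quotient.mk K r ∉ P := by
  refine notMem_of_mem_minimalPrimes_of_mul_mem (fun s hs => ?_) hP
  obtain ⟨s, rfl⟩ := Quotient.mk_surjective s
  rw [← map_mul, mem_quotient_iff_mem hKJ] at hs
  exact (mem_quotient_iff_mem hKJ).mpr (hr s hs)

end Ideal

namespace MvPowerSeries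

variable {σ R : Type*} [CommRing R] [IsDomain R] [DecidableEq σ]

theorem mk_X_notMem_of_mem_minimalPrimes {K : Ideal (MvPowerSeries σ R)} {S : Finset σ}
    (hK : K ≤ Ideal.span (X '' (S : Set σ))) {i : σ} (hi : i ∉ S) {a : MvPowerSeries σ R}
    (ha : a ∉ Ideal.span (X '' ↑(insert i S))) {P : Ideal (MvPowerSeries σ R ⧸ K)}
    (hP : P ∈ ((Ideal.span {a} ⊔ Ideal.span (X '' (S : Set σ))).map
      (Ideal.Quotient.mk K)).minimalPrimes) :
    Ideal.Quotient.mk K (X i) ∉ P := by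
  have hprime := isPrime_span_X_image (R := R) (insert i S)
  rw [span_X_image_insert] at ha hprime
  exact Ideal.notMem_of_mem_minimalPrimes_map_mk (le_sup_of_le_right hK)
    (fun s => Ideal.mem_span_singleton_sup_of_mul_mem (isPrime_span_X_image S)
      (X_notMem_span_X_image hi) hprime ha) hP

end MvPowerSeries

/-- Lemma `minimals`. -/
theorem statement_3 (a : T) (ha : a ∉ Ideal.span {xT, yT, zT}) :
    (∀ P ∈ (Ideal.span {a, xT}).minimalPrimes, ¬ Ideal.span {yT, zT} ≤ P) ∧
    (∀ P ∈ (Ideal.span {a, yT, zT}).minimalPrimes, ¬ Ideal.span {xT} ≤ P) := by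
  obtain ⟨A, rfl⟩ := Ideal.Quotient.mk_surjective a
  have hA : A ∉ Ideal.span (MvPowerSeries.X '' ↑({0, 1, 2} : Finset (Fin 5))) := fun h =>
    ha <| by
      simpa [Ideal.map_span, Set.image_insert_eq, xT, yT, zT, V] using
        Ideal.mem_map_of_mem (Ideal.Quotient.mk K) h
  constructor
  · intro P hP hyz
    refine MvPowerSeries.mk_X_notMem_of_mem_minimalPrimes (K := K) (S := {0}) (i := 1)
      (inf_le_left.trans (by simp [V])) (by decide)
      (fun h => hA (Ideal.span_mono (Set.image_mono (Finset.coe_subset.mpr (by decide))) h))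
      ?_ (hyz (Ideal.subset_span (Set.mem_insert _ _)))
    convert hP using 2
    simp [Ideal.map_sup, Ideal.map_span, Ideal.span_insert, xT, V]
  · intro P hP hx
    refine MvPowerSeries.mk_X_notMem_of_mem_minimalPrimes (K := K) (S := {1, 2}) (i := 0)
      (inf_le_right.trans (by simp [V, Set.image_insert_eq])) (by decide) hA
      ?_ (hx (Ideal.mem_span_singleton_self _))
    convert hP using 2
    simp [Ideal.map_sup, Ideal.map_span, Ideal.span_insert, yT, zT, V, Set.image_insert_eq]

end
end

section
/- Let T = ℚ[[x,y,z,w,t]]/((x) ∩ (y,z)), let Q be a prime ideal of T with dim(T/Q) = 1, let v be a nonzero regular element of T, and let P be an associated prime of T/vT. Then Q is not contained in P. -/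
noncomputable section

/-!
Write `P = ((v) : c)`. Either `P = ((v, x) : c)`, or `P = ((v) : x c₁) = ((v, y, z) : c₁)`, because
`(x)` is prime, `v ∉ (x)` and the annihilator of `x` in `T` is `(y, z)`. Either way `P` is the
preimage of an associated prime of `R / vR`, where `R = T / (x) ≅ ℚ[[y, z, w, t]]` or
`R = T / (y, z) ≅ ℚ[[x, w, t]]`, and `R / P` is a quotient of `T / Q`, so `dim R / P ≤ 1`.
That is impossible once `R` has three variables `x₀, x₁, x₂`. Say `x₀ ∉ P` (otherwise `P` contains
all three). Since `dim R / P ≤ 1`, the ideal `P + (x₀)` is primary to the maximal ideal and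
`P ⊄ (x₀)`, so `P` contains some `g₀ ∉ (x₀)` and elements `g₁ ≡ x₁ᵏ, g₂ ≡ x₂ˡ` modulo `x₀`.
If `P = ((v) : a)`, the element `g₀` lets us cancel the powers of `x₀` dividing `v`. Then, as
`x₁ᵏ, x₂ˡ` is a regular sequence modulo `x₀`, induction gives `a ∈ (v) + (x₀ᴺ)` for all `N`, so
`a ∈ (v)` by Krull's intersection theorem, and then `P = R`.
-/

section Divisibility

variable {α : Type*} [CommMonoidWithZero α] [IsCancelMulZero α] {p q v w z : α}

theorem Prime.dvd_of_dvd_mul_of_not_dvd (hp : Prime p) (hv : ¬ p ∣ v) (h : v ∣ p * w) :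
    v ∣ w := by
  obtain ⟨t, ht⟩ := h
  obtain ⟨t', rfl⟩ := (hp.dvd_or_dvd ⟨w, ht.symm⟩).resolve_left hv
  exact ⟨t', mul_left_cancel₀ hp.ne_zero (by rw [ht, mul_left_comm])⟩

theorem Prime.dvd_of_dvd_mul_of_dvd_mul (hq : Prime q) (hqz : ¬ q ∣ z) (hz : v ∣ z * w)
    (hq' : v ∣ q * w) : v ∣ w := by
  rcases eq_or_ne v 0 with rfl | hv
  · rw [zero_dvd_iff, mul_eq_zero] at hq'
    exact hq'.elim (absurd · hq.ne_zero) (· ▸ dvd_refl _)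
  obtain ⟨B, hB⟩ := hz
  obtain ⟨C, hC⟩ := hq'
  have hBC : q * B = z * C := mul_left_cancel₀ hv <| by
    calc v * (q * B) = q * (z * w) := by rw [mul_left_comm, hB]
      _ = v * (z * C) := by rw [mul_left_comm, hC, mul_left_comm]
  obtain ⟨C', rfl⟩ := (hq.dvd_or_dvd ⟨B, hBC.symm⟩).resolve_left hqz
  exact ⟨C', mul_left_cancel₀ hq.ne_zero (by rw [hC, mul_left_comm])⟩

theorem Prime.dvd_of_dvd_pow_mul_of_dvd_pow_mul (hq : Prime q) (hqz : ¬ q ∣ z) (k l : ℕ)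
    (hz : v ∣ z ^ k * w) (hq' : v ∣ q ^ l * w) : v ∣ w := by
  induction l with
  | zero => simpa using hq'
  | succ l ih =>
    refine ih (hq.dvd_of_dvd_mul_of_dvd_mul (z := z ^ k) (fun h => hqz (hq.dvd_of_dvd_pow h)) ?_ ?_)
    · exact hz.trans ⟨q ^ l, by rw [mul_right_comm, mul_assoc]⟩
    · simpa only [pow_succ', mul_assoc] using hq'

end Divisibility

section CommRing

open Ideal IsLocalRing

variable {R ι κ : Type*} [CommRing R]

-- Modelled on the variables of a power series ring over a domain (`MvPowerSeries.isPrimeFamily_X`).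
def IsPrimeFamily (x : ι → R) : Prop :=
  ∀ s : Set ι, (span (x '' s)).IsPrime ∧ ∀ j ∉ s, x j ∉ span (x '' s)

namespace IsPrimeFamily

variable {x : ι → R}

theorem isDomain (hx : IsPrimeFamily x) : IsDomain R := by
  have := (hx ∅).1
  rw [Set.image_empty, span_empty] at this
  exact IsDomain.of_bot_isPrime R

theorem prime (hx : IsPrimeFamily x) (i : ι) : Prime (x i) := by
  have hne : x i ≠ 0 := by
    simpa using (hx ∅).2 i (Set.notMem_empty i)
  rw [← span_singleton_prime hne, ← Set.image_singleton]
  exact (hx {i}).1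

theorem not_dvd (hx : IsPrimeFamily x) {i j : ι} (hij : i ≠ j) : ¬ x i ∣ x j := by
  rw [← mem_span_singleton, ← Set.image_singleton]
  exact (hx {i}).2 j (Ne.symm hij)

theorem comp (hx : IsPrimeFamily x) {e : κ → ι} (he : e.Injective) : IsPrimeFamily (x ∘ e) := by
  intro s
  rw [Set.image_comp]
  exact ⟨(hx _).1, fun j hj => (hx _).2 _ (he.mem_set_image.not.mpr hj)⟩

theorem quotient (hx : IsPrimeFamily x) {I : Ideal R} {S : Set ι} (hI : I = span (x '' S))
    {e : κ → ι} (he : e.Injective) (heS : ∀ j, e j ∉ S) :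
    IsPrimeFamily (fun j => Ideal.Quotient.mk I (x (e j))) := by
  intro s
  have hspan : span ((fun j => Ideal.Quotient.mk I (x (e j))) '' s)
      = (span (x '' (S ∪ e '' s))).map (Ideal.Quotient.mk I) := by
    rw [Set.image_union, span_union, Ideal.map_sup, ← hI, map_quotient_self, bot_sup_eq, map_span,
      Set.image_image, Set.image_image]
  have hle : I ≤ span (x '' (S ∪ e '' s)) := hI ▸ span_mono (Set.image_mono Set.subset_union_left)
  have := (hx (S ∪ e '' s)).1
  rw [hspan]
  refine ⟨map_isPrime_of_surjective Ideal.Quotient.mk_surjective (by rwa [mk_ker]), ?_⟩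
  intro j hj
  rw [mem_quotient_iff_mem hle]
  refine (hx _).2 _ ?_
  rintro (h | h)
  · exact heS j h
  · exact hj (he.mem_set_image.mp h)

end IsPrimeFamily

section LocalRing

variable [IsLocalRing R] {P : Ideal R} [P.IsPrime]

theorem eq_maximalIdeal_of_lt_of_ringKrullDim_quotient_le_one (hdim : ringKrullDim (R ⧸ P) ≤ 1)
    {S : Ideal R} [hS : S.IsPrime] (hPS : P < S) : S = maximalIdeal R := by
  by_contra hne
  have hSm : S < maximalIdeal R := lt_of_le_of_ne (le_maximalIdeal hS.ne_top) hne
  let pt (I : Ideal R) [hI : I.IsPrime] (h : P ≤ I) : PrimeSpectrum.zeroLocus (R := R) P :=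
    ⟨⟨I, hI⟩, (PrimeSpectrum.mem_zeroLocus _ _).2 (SetLike.coe_subset_coe.2 h)⟩
  rw [ringKrullDim_quotient, Order.krullDim_le_one_iff] at hdim
  rcases hdim (pt S hPS.le) with h | h
  · exact h.not_lt (b := pt P le_rfl) hPS
  · exact h.not_lt (b := pt _ (hPS.le.trans hSm.le)) hSm

theorem mem_radical_sup_span_singleton (hdim : ringKrullDim (R ⧸ P) ≤ 1) {y z : R} (hy : y ∉ P)
    (hz : z ∈ maximalIdeal R) : z ∈ (P ⊔ span {y}).radical := by
  rw [radical_eq_sInf, mem_sInf]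
  rintro S ⟨hle, hS⟩
  have hPS : P < S := lt_of_le_of_ne (le_sup_left.trans hle)
    fun h => hy (h ▸ hle (mem_sup_right (mem_span_singleton_self y)))
  rwa [eq_maximalIdeal_of_lt_of_ringKrullDim_quotient_le_one hdim hPS]

theorem exists_mem_dvd_sub_pow (hdim : ringKrullDim (R ⧸ P) ≤ 1) {y z : R} (hy : y ∉ P)
    (hz : z ∈ maximalIdeal R) : ∃ k, ∃ g ∈ P, y ∣ g - z ^ k := by
  obtain ⟨k, hk⟩ := mem_radical_sup_span_singleton hdim hy hz
  obtain ⟨g, hg, t, ht, hgt⟩ := Submodule.mem_sup.mp hk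
  exact ⟨k, g, hg, by rw [← hgt, sub_add_cancel_left, dvd_neg]; exact mem_span_singleton.mp ht⟩

theorem exists_mem_not_dvd (hdim : ringKrullDim (R ⧸ P) ≤ 1) {y z : R} (hprime : Prime y)
    (hy : y ∉ P) (hz : z ∈ maximalIdeal R) (hyz : ¬ y ∣ z) : ∃ g ∈ P, ¬ y ∣ g := by
  by_contra! h
  have := (span_singleton_prime hprime.ne_zero).mpr hprime
  have hPy : P < span {y} :=
    lt_of_le_of_ne (fun g hg => mem_span_singleton.mpr (h g hg))
      fun h => hy (h ▸ mem_span_singleton_self y)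
  rw [← mem_span_singleton, eq_maximalIdeal_of_lt_of_ringKrullDim_quotient_le_one hdim hPy] at hyz
  exact hyz hz

end LocalRing

theorem dvd_of_forall_dvd_sub_pow_mul [IsNoetherianRing R] [IsLocalRing R] {p v a : R}
    (hp : ¬ IsUnit p) (h : ∀ N, ∃ d, v ∣ a - p ^ N * d) : v ∣ a := by
  let π := Ideal.Quotient.mk (span {v})
  have hI : span {p} ≠ ⊤ := by rwa [Ne, span_singleton_eq_top]
  have hmem : π a ∈ ⨅ N : ℕ, span {p} ^ N • (⊤ : Submodule R (R ⧸ span {v})) := by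
    refine Submodule.mem_iInf _ |>.mpr fun N => ?_
    obtain ⟨d, hd⟩ := h N
    have : π a = p ^ N • π d := by
      rw [Algebra.smul_def, Ideal.Quotient.algebraMap_eq, ← map_mul]
      exact Ideal.Quotient.eq.mpr (mem_span_singleton.mpr hd)
    rw [this]
    exact Submodule.smul_mem_smul (pow_mem_pow (mem_span_singleton_self p) N) trivial
  rw [iInf_pow_smul_eq_bot_of_isLocalRing _ hI, Submodule.mem_bot,
    Ideal.Quotient.eq_zero_iff_mem] at hmem
  exact mem_span_singleton.mp hmem

theorem mem_colon_bot_mk_iff {I : Ideal R} {r c : R} :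
    r ∈ (⊥ : Submodule R (R ⧸ I)).colon {Ideal.Quotient.mk I c} ↔ r * c ∈ I := by
  rw [Submodule.mem_colon_singleton, Submodule.mem_bot, Algebra.smul_def,
    Ideal.Quotient.algebraMap_eq, ← map_mul, Ideal.Quotient.eq_zero_iff_mem]

theorem exists_forall_mem_iff_mul_mem [IsNoetherianRing R] {I P : Ideal R}
    (hP : P ∈ associatedPrimes R (R ⧸ I)) : ∃ c, ∀ r, r ∈ P ↔ r * c ∈ I := by
  obtain ⟨-, x, rfl⟩ := isAssociatedPrime_iff.mp hP
  obtain ⟨c, rfl⟩ := Ideal.Quotient.mk_surjective x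
  exact ⟨c, fun r => mem_colon_bot_mk_iff⟩

theorem mem_associatedPrimes_of_forall_mem_iff_mul_mem {I P : Ideal R} [hP : P.IsPrime] {c : R}
    (h : ∀ r, r ∈ P ↔ r * c ∈ I) : P ∈ associatedPrimes R (R ⧸ I) := by
  refine ⟨hP, Ideal.Quotient.mk I c, ?_⟩
  have : (⊥ : Submodule R (R ⧸ I)).colon {Ideal.Quotient.mk I c} = P := by
    ext r; rw [mem_colon_bot_mk_iff, h]
  rw [this, hP.radical]

namespace IsPrimeFamily

variable {x : Fin 3 → R} {v a d g₀ g₁ g₂ : R} {k l : ℕ}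

theorem exists_eq_mul_add_mul (hx : IsPrimeFamily x)
    (hg₁ : x 0 ∣ g₁ - x 1 ^ k) (hg₂ : x 0 ∣ g₂ - x 2 ^ l) (h₁ : v ∣ g₁ * d) (h₂ : v ∣ g₂ * d) :
    ∃ D E, d = v * D + x 0 * E := by
  let π := Ideal.Quotient.mk (span {x 0})
  have hx' : IsPrimeFamily (fun j : Fin 2 => π (x j.succ)) :=
    hx.quotient (S := {0}) (by rw [Set.image_singleton]) (Fin.succ_injective 2) Fin.succ_ne_zero
  have := hx'.isDomain
  have hπ : ∀ {g y}, x 0 ∣ g - y → π g = π y := fun h =>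
    Ideal.Quotient.eq.mpr (mem_span_singleton.mpr h)
  obtain ⟨D', hD'⟩ : π v ∣ π d := (hx'.prime 1).dvd_of_dvd_pow_mul_of_dvd_pow_mul
    (hx'.not_dvd one_ne_zero) k l (by simpa [hπ hg₁] using map_dvd π h₁)
    (by simpa [hπ hg₂] using map_dvd π h₂)
  obtain ⟨D, rfl⟩ := Ideal.Quotient.mk_surjective D'
  obtain ⟨E, hE⟩ := mem_span_singleton.mp (Ideal.Quotient.eq.mp (hD'.trans (map_mul π v D).symm))
  exact ⟨D, E, by rw [← hE]; ring⟩

theorem dvd_of_not_dvd [IsNoetherianRing R] [IsLocalRing R] (hx : IsPrimeFamily x)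
    (hv : ¬ x 0 ∣ v) (hg₁ : x 0 ∣ g₁ - x 1 ^ k) (hg₂ : x 0 ∣ g₂ - x 2 ^ l) (h₁ : v ∣ g₁ * a)
    (h₂ : v ∣ g₂ * a) : v ∣ a := by
  have := hx.isDomain
  have hp := hx.prime 0
  suffices ∀ N : ℕ, ∃ d, v ∣ a - x 0 ^ N * d ∧ v ∣ g₁ * d ∧ v ∣ g₂ * d from
    dvd_of_forall_dvd_sub_pow_mul hp.not_isUnit fun N => (this N).imp fun _ => And.left
  intro N
  induction N with
  | zero => exact ⟨a, by simp, h₁, h₂⟩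
  | succ N ih =>
    obtain ⟨d, hd, hd₁, hd₂⟩ := ih
    obtain ⟨D, E, rfl⟩ := hx.exists_eq_mul_add_mul hg₁ hg₂ hd₁ hd₂
    have hE : ∀ g, v ∣ g * (v * D + x 0 * E) → v ∣ g * E := fun g h =>
      hp.dvd_of_dvd_mul_of_not_dvd hv <| by
        convert dvd_sub h (dvd_mul_right v (g * D)) using 1; ring
    refine ⟨E, ?_, hE _ hd₁, hE _ hd₂⟩
    convert dvd_add hd (dvd_mul_right v (x 0 ^ N * D)) using 1; ring

theorem dvd_of_dvd_mul [IsNoetherianRing R] [IsLocalRing R] (hx : IsPrimeFamily x) (hv : v ≠ 0)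
    (hg₀ : ¬ x 0 ∣ g₀) (hg₁ : x 0 ∣ g₁ - x 1 ^ k) (hg₂ : x 0 ∣ g₂ - x 2 ^ l)
    (h₀ : v ∣ g₀ * a) (h₁ : v ∣ g₁ * a) (h₂ : v ∣ g₂ * a) : v ∣ a := by
  have := hx.isDomain
  have hp := hx.prime 0
  obtain ⟨n, v', hv', rfl⟩ := WfDvdMonoid.max_power_factor hv hp.irreducible
  obtain ⟨a', rfl⟩ := hp.pow_dvd_of_dvd_mul_left n hg₀ ((dvd_mul_right _ _).trans h₀)
  have hcancel : ∀ g, x 0 ^ n * v' ∣ g * (x 0 ^ n * a') → v' ∣ g * a' := fun g h => by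
    rwa [mul_left_comm, mul_dvd_mul_iff_left (pow_ne_zero n hp.ne_zero)] at h
  exact mul_dvd_mul_left _ (hx.dvd_of_not_dvd hv' hg₁ hg₂ (hcancel _ h₁) (hcancel _ h₂))

variable [IsNoetherianRing R] [IsLocalRing R] {P : Ideal R}

theorem dvd_of_not_mem (hx : IsPrimeFamily x) [P.IsPrime] (hdim : ringKrullDim (R ⧸ P) ≤ 1)
    (hv : v ≠ 0) (hx₀ : x 0 ∉ P) (ha : ∀ g ∈ P, v ∣ g * a) : v ∣ a := by
  have hm : ∀ i, x i ∈ maximalIdeal R := fun i => (mem_maximalIdeal _).mpr (hx.prime i).not_isUnit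
  obtain ⟨k, g₁, hg₁P, hg₁⟩ := exists_mem_dvd_sub_pow hdim hx₀ (hm 1)
  obtain ⟨l, g₂, hg₂P, hg₂⟩ := exists_mem_dvd_sub_pow hdim hx₀ (hm 2)
  obtain ⟨g₀, hg₀P, hg₀⟩ := exists_mem_not_dvd hdim (hx.prime 0) hx₀ (hm 1) (hx.not_dvd (by decide))
  exact hx.dvd_of_dvd_mul hv hg₀ hg₁ hg₂ (ha _ hg₀P) (ha _ hg₁P) (ha _ hg₂P)

theorem dvd_of_forall_mem (hx : IsPrimeFamily x) (hv : v ≠ 0) (hxP : ∀ i, x i ∈ P)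
    (ha : ∀ g ∈ P, v ∣ g * a) : v ∣ a :=
  hx.dvd_of_dvd_mul (k := 1) (l := 1) hv (hx.not_dvd (by decide)) (by simp) (by simp)
    (ha _ (hxP 1)) (ha _ (hxP 1)) (ha _ (hxP 2))

theorem one_lt_ringKrullDim_quotient (hx : IsPrimeFamily x) (hv : v ≠ 0)
    (hP : P ∈ associatedPrimes R (R ⧸ span {v})) : 1 < ringKrullDim (R ⧸ P) := by
  have := hP.isPrime
  obtain ⟨a, ha⟩ := exists_forall_mem_iff_mul_mem hP
  simp_rw [mem_span_singleton] at ha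
  have hva : ¬ v ∣ a := fun h => IsPrime.ne_top ‹_› ((eq_top_iff_one _).mpr ((ha 1).mpr (by simpa)))
  rw [← not_le]
  intro hdim
  apply hva
  by_cases hxP : ∀ i, x i ∈ P
  · exact hx.dvd_of_forall_mem hv hxP fun g => (ha g).mp
  · push Not at hxP
    obtain ⟨i, hi⟩ := hxP
    exact (hx.comp (Equiv.swap 0 i).injective).dvd_of_not_mem hdim hv (by simpa using hi)
      fun g => (ha g).mp

end IsPrimeFamily

theorem map_mem_associatedPrimes_of_forall_mem_iff {A : Type*} [CommRing A] {f : A →+* R}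
    (hf : Function.Surjective f) {v c : A} {P : Ideal A} [P.IsPrime]
    (hc : ∀ r, r ∈ P ↔ r * c ∈ span {v} ⊔ RingHom.ker f) :
    P.map f ∈ associatedPrimes R (R ⧸ span {f v}) := by
  have hker : RingHom.ker f ≤ P := fun r hr => (hc r).mpr (mem_sup_right (mul_mem_right c _ hr))
  have := map_isPrime_of_surjective hf hker
  have hP : (P.map f).comap f = P := by rw [comap_map_of_surjective' f hf, sup_eq_left.mpr hker]
  have hv : (span {f v}).comap f = span {v} ⊔ RingHom.ker f := by
    rw [← Set.image_singleton, ← map_span, comap_map_of_surjective' f hf]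
  refine mem_associatedPrimes_of_forall_mem_iff_mul_mem (c := f c) fun b => ?_
  obtain ⟨r, rfl⟩ := hf b
  rw [← map_mul, ← mem_comap, ← mem_comap, hP, hv, hc]

theorem IsPrimeFamily.one_lt_ringKrullDim_quotient_of_surjective {A : Type*} [CommRing A]
    [IsNoetherianRing R] [IsLocalRing R] {x : Fin 3 → R} (hx : IsPrimeFamily x) {f : A →+* R}
    (hf : Function.Surjective f) {v c : A} (hv : v ∉ RingHom.ker f) {P : Ideal A} [P.IsPrime]
    (hc : ∀ r, r ∈ P ↔ r * c ∈ span {v} ⊔ RingHom.ker f) : 1 < ringKrullDim (A ⧸ P) :=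
  (hx.one_lt_ringKrullDim_quotient (by rwa [Ne, ← RingHom.mem_ker])
    (map_mem_associatedPrimes_of_forall_mem_iff hf hc)).trans_le
    (ringKrullDim_le_of_surjective _ (quotientMap_surjective (H := le_comap_map) hf))

section TwoComponents

variable {x v : R} {I : Ideal R} [(span {x}).IsPrime]

theorem mul_mem_span_singleton_iff_mem_sup (hann : ∀ u, x * u = 0 ↔ u ∈ I) (hv : v ∉ span {x})
    {w : R} : x * w ∈ span {v} ↔ w ∈ span {v} ⊔ I := by
  constructor
  · intro h
    obtain ⟨t, ht⟩ := mem_span_singleton'.mp h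
    have : t ∈ span {x} :=
      ((IsPrime.mem_or_mem ‹_› (ht ▸ mem_span_singleton'.mpr ⟨w, mul_comm w x⟩)).resolve_right hv)
    obtain ⟨t', rfl⟩ := mem_span_singleton'.mp this
    rw [← add_sub_cancel (t' * v) w]
    refine Submodule.add_mem_sup (mem_span_singleton'.mpr ⟨t', rfl⟩) ((hann _).mp ?_)
    rw [mul_sub, ← ht]
    ring
  · intro h
    obtain ⟨_, hy, u, hu, rfl⟩ := Submodule.mem_sup.mp h
    obtain ⟨t, rfl⟩ := mem_span_singleton'.mp hy
    rw [mul_add, (hann u).mpr hu, add_zero]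
    exact mul_mem_left _ x (mul_mem_left _ t (mem_span_singleton_self v))

theorem exists_forall_mem_iff_mul_mem_sup (hann : ∀ u, x * u = 0 ↔ u ∈ I) (hv : v ∉ span {x})
    {P : Ideal R} [P.IsPrime] {c : R} (hc : ∀ r, r ∈ P ↔ r * c ∈ span {v}) :
    ∃ c', (∀ r, r ∈ P ↔ r * c' ∈ span {v} ⊔ span {x}) ∨ (∀ r, r ∈ P ↔ r * c' ∈ span {v} ⊔ I) := by
  by_cases h : ∀ r, r * c ∈ span {v} ⊔ span {x} → r * c ∈ span {v}
  · exact ⟨c, Or.inl fun r => (hc r).trans ⟨fun h' => mem_sup_left h', h r⟩⟩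
  push Not at h
  obtain ⟨r₀, hr₀, hr₀c⟩ := h
  obtain ⟨j, hj, _, hy, hjy⟩ := Submodule.mem_sup.mp hr₀
  obtain ⟨c₁, rfl⟩ := mem_span_singleton'.mp hy
  have hr₀P : r₀ ∉ P := fun h => hr₀c ((hc r₀).mp h)
  refine ⟨c₁, Or.inr fun r => ?_⟩
  have key : r * r₀ * c = r * j + x * (r * c₁) := by rw [mul_assoc, ← hjy]; ring
  rw [← mul_mem_span_singleton_iff_mem_sup hann hv,
    ← (span {v}).add_mem_iff_right (mul_mem_left _ r hj), ← key, ← hc]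
  exact ⟨fun h => mul_mem_right _ _ h, fun h => (IsPrime.mem_or_mem ‹_› h).resolve_right hr₀P⟩

end TwoComponents

end CommRing

namespace MvPowerSeries

open Ideal

section CommSemiring

variable {σ R : Type*} [CommSemiring R] {s : Set σ} {n : σ →₀ ℕ}

-- `rescale (sᶜ.indicator 1)` substitutes `0` for the variables in `s`.
theorem coeff_rescale_indicator_compl_of_forall (h : ∀ i ∈ s, n i = 0) (f : MvPowerSeries σ R) :
    coeff n (rescale (sᶜ.indicator 1) f) = coeff n f := by
  rw [coeff_rescale, Finsupp.prod, Finset.prod_eq_one, one_mul]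
  intro i hi
  rw [Set.indicator_of_mem (show i ∈ sᶜ from fun his => Finsupp.mem_support_iff.mp hi (h i his)),
    Pi.one_apply, one_pow]

theorem coeff_rescale_indicator_compl_of_mem {i : σ} (hi : i ∈ s) (hn : n i ≠ 0)
    (f : MvPowerSeries σ R) : coeff n (rescale (sᶜ.indicator 1) f) = 0 := by
  rw [coeff_rescale, Finsupp.prod, Finset.prod_eq_zero (Finsupp.mem_support_iff.mpr hn), zero_mul]
  rw [Set.indicator_of_notMem (Set.notMem_compl_iff.mpr hi), zero_pow hn]

theorem rescale_indicator_compl_rescale_indicator_compl (s t : Set σ) (f : MvPowerSeries σ R) :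
    rescale (sᶜ.indicator 1) (rescale (tᶜ.indicator 1) f) = rescale ((t ∪ s)ᶜ.indicator 1) f := by
  rw [rescale_rescale, Set.compl_union, Set.inter_indicator_one]

theorem X_mem_ker_rescale_indicator_compl {j : σ} (hj : j ∈ s) :
    (X j : MvPowerSeries σ R) ∈ RingHom.ker (rescale (sᶜ.indicator 1)) := by
  classical
  ext n
  by_cases hn : n j = 0
  · rw [coeff_rescale, coeff_X, if_neg (fun h => by simp [h] at hn), mul_zero, map_zero]
  · rw [coeff_rescale_indicator_compl_of_mem hj hn, map_zero]

theorem X_notMem_ker_rescale_indicator_compl [Nontrivial R] {j : σ} (hj : j ∉ s) :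
    (X j : MvPowerSeries σ R) ∉ RingHom.ker (rescale (sᶜ.indicator 1)) := by
  classical
  intro h
  have := congrArg (coeff (Finsupp.single j 1)) (RingHom.mem_ker.mp h)
  rw [coeff_rescale_indicator_compl_of_forall, coeff_X, if_pos rfl, map_zero] at this
  · exact one_ne_zero this
  · intro i hi
    rw [Finsupp.single_apply, if_neg (by rintro rfl; exact hj hi)]

end CommSemiring

variable {σ R : Type*} [CommRing R] {s : Set σ}

theorem ker_rescale_indicator_compl (hs : s.Finite) :
    RingHom.ker (rescale (sᶜ.indicator 1) : MvPowerSeries σ R →+* _) = span (X '' s) := by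
  refine le_antisymm ?_ (span_le.mpr ?_)
  · induction s, hs using Set.Finite.induction_on with
    | empty =>
      intro f hf
      rw [Set.compl_empty, Set.indicator_univ, rescale_one, RingHom.mem_ker, RingHom.id_apply] at hf
      rw [hf]
      exact zero_mem _
    | @insert i s hi hs ih =>
      intro f hf
      have hXi : X i ∣ f - rescale (({i} : Set σ)ᶜ.indicator 1) f := by
        refine X_dvd_iff.mpr fun m hm => ?_
        rw [map_sub, coeff_rescale_indicator_compl_of_forall
          (fun i' hi' => (Set.mem_singleton_iff.mp hi') ▸ hm), sub_self]
      have hker :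
          rescale (({i} : Set σ)ᶜ.indicator 1) f ∈ RingHom.ker (rescale (sᶜ.indicator 1)) := by
        rwa [RingHom.mem_ker, rescale_indicator_compl_rescale_indicator_compl, ← Set.insert_eq]
      rw [← sub_add_cancel f (rescale (({i} : Set σ)ᶜ.indicator 1) f)]
      obtain ⟨g, hg⟩ := hXi
      refine add_mem ?_ (span_mono (Set.image_mono (Set.subset_insert i s)) (ih hker))
      rw [hg]
      exact mul_mem_right _ _ (subset_span ⟨i, Set.mem_insert i s, rfl⟩)
  · rintro _ ⟨j, hj, rfl⟩
    exact X_mem_ker_rescale_indicator_compl hj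

theorem isPrimeFamily_X [Finite σ] [IsDomain R] : IsPrimeFamily (X : σ → MvPowerSeries σ R) :=
  fun s => by
    have := NoZeroDivisors.to_isDomain (MvPowerSeries σ R)
    rw [← ker_rescale_indicator_compl s.toFinite]
    exact ⟨RingHom.ker_isPrime _, fun j hj => X_notMem_ker_rescale_indicator_compl hj⟩

end MvPowerSeries

open Ideal

theorem isPrimeFamily_V : IsPrimeFamily V := MvPowerSeries.isPrimeFamily_X

theorem K_le_span_V_zero : K ≤ span (V '' {0}) := by
  rw [Set.image_singleton]; exact inf_le_left

theorem K_le_span_V_one_two : K ≤ span (V '' {1, 2}) := by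
  rw [Set.image_pair]; exact inf_le_right

theorem span_xT : span {xT} = (span (V '' {0})).map (Ideal.Quotient.mk K) := by
  rw [map_span, Set.image_singleton, Set.image_singleton]; rfl

theorem span_yT_zT : span {yT, zT} = (span (V '' {1, 2})).map (Ideal.Quotient.mk K) := by
  rw [map_span, Set.image_pair, Set.image_pair]; rfl

instance isPrime_span_xT : (span {xT}).IsPrime := by
  have := (isPrimeFamily_V {0}).1
  rw [span_xT]
  exact map_isPrime_of_surjective Ideal.Quotient.mk_surjective
    (by rw [mk_ker]; exact K_le_span_V_zero)

theorem xT_mul_eq_zero_iff (u : T) : xT * u = 0 ↔ u ∈ span {yT, zT} := by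
  obtain ⟨u, rfl⟩ := Ideal.Quotient.mk_surjective u
  rw [span_yT_zT, mem_quotient_iff_mem K_le_span_V_one_two, xT, ← map_mul,
    Ideal.Quotient.eq_zero_iff_mem, K, mem_inf]
  have h12 := isPrimeFamily_V {1, 2}
  rw [Set.image_pair] at h12 ⊢
  refine ⟨fun h => (h12.1.mem_or_mem h.2).resolve_left (h12.2 0 (by decide)), fun h => ?_⟩
  exact ⟨mul_mem_right _ _ (mem_span_singleton_self _), mul_mem_left _ _ h⟩

theorem xT_ne_zero : xT ≠ 0 := by
  rw [xT, Ne, Ideal.Quotient.eq_zero_iff_mem]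
  exact fun h => (isPrimeFamily_V {1, 2}).2 0 (by decide) (K_le_span_V_one_two h)

theorem yT_ne_zero : yT ≠ 0 := by
  rw [yT, Ne, Ideal.Quotient.eq_zero_iff_mem]
  exact fun h => (isPrimeFamily_V {0}).2 1 (by decide) (K_le_span_V_zero h)

theorem notMem_span_xT {v : T} (hv : v ∈ nonZeroDivisors T) : v ∉ span {xT} := by
  intro h
  obtain ⟨t, rfl⟩ := mem_span_singleton'.mp h
  refine yT_ne_zero ((mem_nonZeroDivisors_iff.mp hv).2 yT ?_)
  rw [mul_left_comm, mul_comm yT, (xT_mul_eq_zero_iff yT).mpr (subset_span (by simp)), mul_zero]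

theorem notMem_span_yT_zT {v : T} (hv : v ∈ nonZeroDivisors T) : v ∉ span {yT, zT} :=
  fun h => xT_ne_zero ((mem_nonZeroDivisors_iff.mp hv).2 xT ((xT_mul_eq_zero_iff v).mpr h))

theorem one_lt_ringKrullDim_quotient_of_forall_mem_iff (s : Set (Fin 5)) {e : Fin 3 → Fin 5}
    (he : e.Injective) (hes : ∀ j, e j ∉ s) (hK : K ≤ span (V '' s)) {v c : T}
    (hv : v ∉ (span (V '' s)).map (Ideal.Quotient.mk K)) {P : Ideal T} [P.IsPrime]
    (hc : ∀ r, r ∈ P ↔ r * c ∈ span {v} ⊔ (span (V '' s)).map (Ideal.Quotient.mk K)) :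
    1 < ringKrullDim (T ⧸ P) := by
  have := (isPrimeFamily_V s).1
  have : IsLocalRing (PS ⧸ span (V '' s)) :=
    .of_surjective' (Ideal.Quotient.mk _) Ideal.Quotient.mk_surjective
  rw [← Ideal.Quotient.factor_ker hK] at hv hc
  exact (isPrimeFamily_V.quotient rfl he hes).one_lt_ringKrullDim_quotient_of_surjective
    (Ideal.Quotient.factor_surjective hK) hv hc

theorem statement_4_general (Q : Ideal T)
    (hdim : ringKrullDim (T ⧸ Q) = 1)
    (v : T) (hvreg : v ∈ nonZeroDivisors T)
    (P : Ideal T) (hP : P ∈ associatedPrimes T (T ⧸ Ideal.span {v})) :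
    ¬ Q ≤ P := by
  intro hQP
  have hP_dim : ringKrullDim (T ⧸ P) ≤ 1 := hdim ▸ ringKrullDim_le_of_surjective
    (Ideal.Quotient.factor hQP) (Ideal.Quotient.factor_surjective hQP)
  have := hP.isPrime
  obtain ⟨c, hc⟩ := exists_forall_mem_iff_mul_mem hP
  refine hP_dim.not_gt ?_
  obtain ⟨c', hc' | hc'⟩ :=
    exists_forall_mem_iff_mul_mem_sup xT_mul_eq_zero_iff (notMem_span_xT hvreg) hc
  · rw [span_xT] at hc'
    exact one_lt_ringKrullDim_quotient_of_forall_mem_iff {0} (e := ![1, 2, 3]) (by decide)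
      (by decide) K_le_span_V_zero (span_xT ▸ notMem_span_xT hvreg) hc'
  · rw [span_yT_zT] at hc'
    exact one_lt_ringKrullDim_quotient_of_forall_mem_iff {1, 2} (e := ![0, 3, 4]) (by decide)
      (by decide) K_le_span_V_one_two (span_yT_zT ▸ notMem_span_yT_zT hvreg) hc'

/-- Lemma `ExampleQ`. -/
theorem statement_4 (Q : Ideal T) (hQ : Q.IsPrime)
    (hdim : ringKrullDim (T ⧸ Q) = 1)
    (v : T) (hv0 : v ≠ 0) (hvreg : v ∈ nonZeroDivisors T)
    (P : Ideal T) (hP : P ∈ associatedPrimes T (T ⧸ Ideal.span {v})) :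
    ¬ Q ≤ P :=
  statement_4_general Q hdim v hvreg P hP

end
end

section
/- Let T be a Noetherian local ring, let R be a subring of T which is a domain such that R ∩ P = (0) for every associated prime P of T, and let x ∈ T be such that for every associated prime P of T, the image of x in T/P is transcendental over the image of R in T/P. Then x is transcendental over R. -/
/-- transcendence over an N-subring from transcendence mod associated primes. -/
theorem statement_8 (T : Type*) [CommRing T] [IsNoetherianRing T] [IsLocalRing T]
    (R : Subring T) [IsDomain R]
    (hR : ∀ P ∈ associatedPrimes T T, P.comap R.subtype = ⊥)
    (x : T)
    (hx : ∀ P ∈ associatedPrimes T T, Transcendental R (Ideal.Quotient.mk P x)) :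
    Transcendental R x := by
  obtain ⟨P, hP⟩ := associatedPrimes.nonempty T T
  intro halg
  obtain ⟨p, hp, hpev⟩ := halg
  exact hx P hP ⟨p, hp, by
    rw [show ((Ideal.Quotient.mk P) x) = (Ideal.Quotient.mkₐ R P) x from rfl,
      Polynomial.aeval_algHom_apply, hpev, map_zero]⟩
end

section
/- Let T be a Noetherian ring, let S be a subring of T which is a unique factorization domain satisfying: for every regular element t ∈ T and every associated prime P of T/tT, the height of S ∩ P is at most 1. Let x̃ ∈ S be a prime element of S, suppose x̃ is a regular element of T, and let P be a height one prime ideal of T with x̃ ∈ P. Then S ∩ P = x̃S. -/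
/-!
A height-one prime `P` containing the regular element `x` is minimal over `x T`, since `x` lies in
no minimal prime of `T`; minimal primes of `T ⧸ x T` are associated, so `S ∩ P` has height at
most one. It contains the nonzero prime `x`, hence has height exactly one, and a height-one prime
of a domain containing a prime element is generated by it.
-/

/-- The height of an ideal `P`: the Krull dimension of the poset of primes contained in `P`. -/
noncomputable def idealHt {A : Type*} [CommRing A] (P : Ideal A) : WithBot (WithTop ℕ) :=
  Order.krullDim {Q : PrimeSpectrum A // Q.asIdeal ≤ P}

theorem idealHt_eq_height {A : Type*} [CommRing A] (P : Ideal A) [hP : P.IsPrime] :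
    idealHt P = (P.height : WithBot ℕ∞) := by
  rw [show P = (⟨P, hP⟩ : PrimeSpectrum A).asIdeal from rfl, PrimeSpectrum.height_eq_orderHeight,
    Order.height_eq_krullDim_Iic]
  rfl

theorem Ideal.mem_minimalPrimes_span_singleton_of_height_eq_one {R : Type*} [CommRing R]
    [IsNoetherianRing R] {x : R} (hx : x ∈ nonZeroDivisors R) {P : Ideal R} [P.IsPrime]
    (hPht : P.height = 1) (hxP : x ∈ P) : P ∈ (Ideal.span {x}).minimalPrimes :=
  Ideal.mem_minimalPrimes_of_height_le ((Ideal.span_singleton_le_iff_mem P).mpr hxP)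
    (hPht ▸ Ideal.one_le_height_span_singleton_of_mem_nonZeroDivisors hx)

theorem Ideal.mem_associatedPrimes_of_mem_minimalPrimes {R : Type*} [CommRing R]
    [IsNoetherianRing R] {I P : Ideal R} (hP : P ∈ I.minimalPrimes) :
    P ∈ associatedPrimes R (R ⧸ I) :=
  Module.associatedPrimes.minimalPrimes_annihilator_subset_associatedPrimes R (R ⧸ I)
    (by rwa [I.annihilator_quotient])

theorem Ideal.height_eq_one_of_height_le_one_of_mem_prime {R : Type*} [CommRing R] [IsDomain R]
    {p : Ideal R} (hp : p.height ≤ 1) {x : R} (hx : x ∈ p) (hxp : Prime x) : p.height = 1 := by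
  refine le_antisymm hp (Order.one_le_iff_ne_zero.mpr ?_)
  rw [Ne, Ideal.height_eq_zero_iff_eq_bot]
  rintro rfl
  exact hxp.ne_zero ((Submodule.mem_bot R).mp hx)

theorem statement_9_general (T : Type*) [CommRing T] [IsNoetherianRing T]
    (S : Subring T) [IsDomain S]
    (hS : ∀ t ∈ nonZeroDivisors T, ∀ P ∈ associatedPrimes T (T ⧸ Ideal.span {t}),
      idealHt (P.comap S.subtype) ≤ 1)
    (x : S) (hxprime : Prime x) (hxreg : (x : T) ∈ nonZeroDivisors T)
    (P : Ideal T) (hP : P.IsPrime) (hPht : idealHt P = 1) (hxP : (x : T) ∈ P) :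
    P.comap S.subtype = Ideal.span {x} := by
  have hPheight : P.height = 1 := WithBot.coe_eq_one.mp (idealHt_eq_height P ▸ hPht)
  have hPass : P ∈ associatedPrimes T (T ⧸ Ideal.span {(x : T)}) :=
    Ideal.mem_associatedPrimes_of_mem_minimalPrimes
      (Ideal.mem_minimalPrimes_span_singleton_of_height_eq_one hxreg hPheight hxP)
  have hSPheight : (P.comap S.subtype).height ≤ 1 :=
    WithBot.coe_le_one.mp (idealHt_eq_height (P.comap S.subtype) ▸ hS _ hxreg P hPass)
  exact Ideal.eq_span_singleton_of_height_eq_one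
    (Ideal.height_eq_one_of_height_le_one_of_mem_prime hSPheight hxP hxprime) hxP hxprime

theorem statement_9 (T : Type*) [CommRing T] [IsNoetherianRing T]
    (S : Subring T) [IsDomain S] [UniqueFactorizationMonoid S]
    (hS : ∀ t ∈ nonZeroDivisors T, ∀ P ∈ associatedPrimes T (T ⧸ Ideal.span {t}),
      idealHt (P.comap S.subtype) ≤ 1)
    (x : S) (hxprime : Prime x) (hxreg : (x : T) ∈ nonZeroDivisors T)
    (P : Ideal T) (hP : P.IsPrime) (hPht : idealHt P = 1) (hxP : (x : T) ∈ P) :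
    P.comap S.subtype = Ideal.span {x} :=
  statement_9_general T S hS x hxprime hxreg P hP hPht hxP
end
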